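/- The function ψ : [0,1] → ℝ defined by ψ(x) = 1 − e^{−√x}·√(1 + 2√x) satisfies ψ(0) = 0, ψ'(x) = (1 − ψ(x))/(1 + 2√x) for all x ∈ (0,1], its derivative ψ'(x) = e^{−√x}/√(1 + 2√x) is monotonically decreasing on (0,1], ψ is concave on [0,1], and ψ(1) = 1 − √3/e. -/

import Mathlib

/-!
With `s = √x` and `u = 1 + 2s`, the derivative of `e^{-s}·√u` is
`e^{-s}·(1/√u − √u)/(2s) = −e^{-s}/√u`, because `u − 1 = 2s`. Hence `ψ' = e^{-s}/√u = (1 − ψ)/u`,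
a decreasing function of `s` and so of `x`; being continuous on `[0, ∞)`, `ψ` is concave there.
-/

/-- The function `ψ(x) = 1 − e^{−√x}·√(1 + 2√x)`. -/
noncomputable def psiFun (x : ℝ) : ℝ :=
  1 - Real.exp (-Real.sqrt x) * Real.sqrt (1 + 2 * Real.sqrt x)

open Real

noncomputable def psiDeriv (x : ℝ) : ℝ :=
  exp (-√x) / √(1 + 2 * √x)

lemma one_sub_psiFun (x : ℝ) : 1 - psiFun x = exp (-√x) * √(1 + 2 * √x) :=
  sub_sub_cancel _ _

lemma psiFun_zero : psiFun 0 = 0 := by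
  simp [psiFun]

lemma psiFun_one : psiFun 1 = 1 - √3 / exp 1 := by
  rw [psiFun, sqrt_one, exp_neg, inv_mul_eq_div]
  norm_num

lemma continuous_psiFun : Continuous psiFun := by
  unfold psiFun
  fun_prop

lemma hasDerivAt_psiFun {x : ℝ} (hx : 0 < x) : HasDerivAt psiFun (psiDeriv x) x := by
  have hu : 0 < 1 + 2 * √x := by positivity
  have hsqrt : HasDerivAt (√·) (1 / (2 * √x)) x := hasDerivAt_sqrt hx.ne'
  have hexp := hsqrt.neg.exp
  have hsqrtu := ((hsqrt.const_mul 2).const_add 1).sqrt hu.ne'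
  refine ((hexp.mul hsqrtu).const_sub 1).congr_deriv ?_
  have hsq : √(1 + 2 * √x) ^ 2 = 1 + 2 * √x := sq_sqrt hu.le
  rw [psiDeriv, Pi.neg_apply]
  have hr : 0 < √(1 + 2 * √x) := sqrt_pos.2 hu
  generalize √(1 + 2 * √x) = r at hsq hr ⊢
  field_simp
  linear_combination hsq

lemma psiDeriv_eq_one_sub_psiFun_div (x : ℝ) :
    psiDeriv x = (1 - psiFun x) / (1 + 2 * √x) := by
  rw [psiDeriv, one_sub_psiFun, mul_div_assoc, sqrt_div_self', mul_one_div]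

lemma antitone_psiDeriv : Antitone psiDeriv := by
  intro x y hxy
  have hsqrt : √x ≤ √y := sqrt_le_sqrt hxy
  exact div_le_div₀ (exp_pos _).le (exp_le_exp.2 (neg_le_neg hsqrt))
    (sqrt_pos.2 (by positivity)) (sqrt_le_sqrt (by linarith))

lemma concaveOn_psiFun : ConcaveOn ℝ (Set.Ici 0) psiFun := by
  apply AntitoneOn.concaveOn_of_deriv (convex_Ici 0) continuous_psiFun.continuousOn
  · rw [interior_Ici]
    exact fun x hx => (hasDerivAt_psiFun hx).differentiableAt.differentiableWithinAt
  · rw [interior_Ici]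
    intro x hx y hy hxy
    rw [(hasDerivAt_psiFun hx).deriv, (hasDerivAt_psiFun hy).deriv]
    exact antitone_psiDeriv hxy

theorem stmt_6 :
    psiFun 0 = 0 ∧
    (∀ x ∈ Set.Ioc (0:ℝ) 1,
      HasDerivAt psiFun (Real.exp (-Real.sqrt x) / Real.sqrt (1 + 2 * Real.sqrt x)) x ∧
      Real.exp (-Real.sqrt x) / Real.sqrt (1 + 2 * Real.sqrt x) =
        (1 - psiFun x) / (1 + 2 * Real.sqrt x)) ∧
    AntitoneOn (fun x => Real.exp (-Real.sqrt x) / Real.sqrt (1 + 2 * Real.sqrt x))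
      (Set.Ioc (0:ℝ) 1) ∧
    ConcaveOn ℝ (Set.Icc (0:ℝ) 1) psiFun ∧
    psiFun 1 = 1 - Real.sqrt 3 / Real.exp 1 :=
  ⟨psiFun_zero,
    fun x hx => ⟨hasDerivAt_psiFun hx.1, psiDeriv_eq_one_sub_psiFun_div x⟩,
    antitone_psiDeriv.antitoneOn _,
    concaveOn_psiFun.subset Set.Icc_subset_Ici_self (convex_Icc 0 1),
    psiFun_one⟩
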